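/- Let H be a symmetric n × n real matrix, let d^{FW}, d^{k−1}, …, d^{k−N} ∈ ℝ^n be pairwise H-conjugate ((d^{k−m})ᵀ H d^{k−n} = 0 for m ≠ n in {1, …, N}), let γ_{k−1}, …, γ_{k−N} ∈ ℝ, and let α_0, …, α_N ∈ ℝ. Then for each m ∈ {1, …, N}, the inner product of d^{k−m} with H applied to the direction d^k = α_0 d^{FW} + Σ_{m'=1}^N α_{m'} ( Σ_{i=0}^{m'−1} (1 − γ_{k−m'+i}) d^{k−m'+i} − Σ_{i=0}^{m'−2} d^{k−m'+i+1} ) equals α_0 A_m + (1 − γ_{k−m}) B_m α_m − γ_{k−m} B_m Σ_{i=m+1}^N α_i, where A_m = (d^{k−m})ᵀ H d^{FW} and B_m = (d^{k−m})ᵀ H d^{k−m}. -/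

import Mathlib

/-!
With `w = d^{k-m}ᵀ H`, every inner product in the claim is `w ⬝ᵥ ·`, and conjugacy says that `w`
annihilates `d^{k-j}` for `j ∈ [1, N]`, `j ≠ m`. Re-indexing the `m'`-th correction by the offset
`j` back from step `k` (legitimate since `m' ≤ N ≤ k`, so no natural subtraction truncates) turns
it into `∑_{j=1}^{m'} (1 - γ_{k-j}) d^{k-j} - ∑_{j=1}^{m'-1} d^{k-j}`, on which `w` takes the
value `(1 - γ_{k-m}) B_m [m ≤ m'] - B_m [m < m']`. Summing against `α` gives
`(1 - γ_{k-m}) B_m ∑_{i ≥ m} α_i - B_m ∑_{i > m} α_i`, and splitting off `i = m` yields the claim.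
-/

open Matrix Finset

lemma sum_range_sub_add_eq_sum_Icc {M : Type*} [AddCommMonoid M] (f : ℕ → M) {k m : ℕ}
    (h : m ≤ k) : ∑ i ∈ range m, f (k - m + i) = ∑ j ∈ Icc 1 m, f (k - j) :=
  sum_nbij' (fun i ↦ m - i) (fun j ↦ m - j)
    (fun i hi ↦ by simp only [mem_range, mem_Icc] at hi ⊢; omega)
    (fun j hj ↦ by simp only [mem_range, mem_Icc] at hj ⊢; omega)
    (fun i hi ↦ by simp only [mem_range] at hi; omega)
    (fun j hj ↦ by simp only [mem_Icc] at hj; omega)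
    (fun i hi ↦ by simp only [mem_range] at hi; congr 1; omega)

lemma sum_Icc_ite_le {M : Type*} [AddCommMonoid M] (f : ℕ → M) {a m N : ℕ} (h : a ≤ m) :
    ∑ j ∈ Icc a N, (if m ≤ j then f j else 0) = ∑ j ∈ Icc m N, f j := by
  rw [← sum_filter]
  congr 1
  ext j
  simp only [mem_filter, mem_Icc]
  omega

lemma dotProduct_sum_smul_eq_ite {R ι n : Type*} [CommSemiring R] [Fintype n] [DecidableEq ι]
    (w : n → R) (v : ι → n → R) (c : ι → R) {s : Finset ι} {m : ι}
    (hv : ∀ j ∈ s, j ≠ m → w ⬝ᵥ v j = 0) :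
    w ⬝ᵥ ∑ j ∈ s, c j • v j = if m ∈ s then c m * (w ⬝ᵥ v m) else 0 := by
  simp only [dotProduct_sum, dotProduct_smul, smul_eq_mul]
  split_ifs with hm
  · exact sum_eq_single_of_mem m hm fun j hj hne ↦ by rw [hv j hj hne, mul_zero]
  · exact sum_eq_zero fun j hj ↦ by rw [hv j hj (ne_of_mem_of_not_mem hj hm), mul_zero]

lemma nfw_correction_eq_sum_Icc {R M : Type*} [Ring R] [AddCommGroup M] [Module R M]
    (d : ℕ → M) (γ : ℕ → R) {k m' : ℕ} (h : m' ≤ k) :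
    ∑ i ∈ range m', (1 - γ (k - m' + i)) • d (k - m' + i)
        - ∑ i ∈ range (m' - 1), d (k - m' + i + 1)
      = ∑ j ∈ Icc 1 m', (1 - γ (k - j)) • d (k - j) - ∑ j ∈ Icc 1 (m' - 1), d (k - j) := by
  have hshift : ∑ i ∈ range (m' - 1), d (k - m' + i + 1)
      = ∑ i ∈ range (m' - 1), d (k - (m' - 1) + i) :=
    sum_congr rfl fun i hi ↦ by simp only [mem_range] at hi; congr 1; omega
  rw [hshift, sum_range_sub_add_eq_sum_Icc (fun j ↦ (1 - γ j) • d j) h,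
    sum_range_sub_add_eq_sum_Icc d (by omega : m' - 1 ≤ k)]

lemma dotProduct_correction_Icc_eq_ite {R n : Type*} [CommRing R] [Fintype n] (w : n → R)
    (d : ℕ → n → R) (γ : ℕ → R) {k m m' : ℕ} (hm : 1 ≤ m)
    (hw : ∀ j ∈ Icc 1 m', j ≠ m → w ⬝ᵥ d (k - j) = 0) :
    w ⬝ᵥ (∑ j ∈ Icc 1 m', (1 - γ (k - j)) • d (k - j) - ∑ j ∈ Icc 1 (m' - 1), d (k - j))
      = (if m ≤ m' then (1 - γ (k - m)) * (w ⬝ᵥ d (k - m)) else 0)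
        - if m + 1 ≤ m' then w ⬝ᵥ d (k - m) else 0 := by
  have hfirst := dotProduct_sum_smul_eq_ite w (fun j ↦ d (k - j)) (fun j ↦ 1 - γ (k - j)) hw
  have hsecond := dotProduct_sum_smul_eq_ite w (fun j ↦ d (k - j)) 1 (s := Icc 1 (m' - 1))
    fun j hj ↦ hw j (Icc_subset_Icc_right (Nat.sub_le m' 1) hj)
  have hmem : m ∈ Icc 1 m' ↔ m ≤ m' := by simp only [mem_Icc, hm, true_and]
  have hmem' : m ∈ Icc 1 (m' - 1) ↔ m + 1 ≤ m' := by simp only [mem_Icc]; omega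
  simp only [Pi.one_apply, one_smul, one_mul, hmem, hmem'] at hfirst hsecond
  rw [dotProduct_sub, hfirst, hsecond]

lemma dotProduct_sum_nfw_correction {R n : Type*} [CommRing R] [Fintype n] (w : n → R)
    (d : ℕ → n → R) (γ α : ℕ → R) {N k m : ℕ} (hNk : N ≤ k) (hm : 1 ≤ m)
    (hw : ∀ j ∈ Icc 1 N, j ≠ m → w ⬝ᵥ d (k - j) = 0) :
    w ⬝ᵥ ∑ m' ∈ Icc 1 N, α m' •
        (∑ i ∈ range m', (1 - γ (k - m' + i)) • d (k - m' + i)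
          - ∑ i ∈ range (m' - 1), d (k - m' + i + 1))
      = (1 - γ (k - m)) * (w ⬝ᵥ d (k - m)) * ∑ j ∈ Icc m N, α j
        - w ⬝ᵥ d (k - m) * ∑ j ∈ Icc (m + 1) N, α j := by
  have hterm : ∀ m' ∈ Icc 1 N, w ⬝ᵥ (α m' •
        (∑ i ∈ range m', (1 - γ (k - m' + i)) • d (k - m' + i)
          - ∑ i ∈ range (m' - 1), d (k - m' + i + 1)))
      = (if m ≤ m' then α m' * ((1 - γ (k - m)) * (w ⬝ᵥ d (k - m))) else 0)
        - if m + 1 ≤ m' then α m' * (w ⬝ᵥ d (k - m)) else 0 := by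
    intro m' hm'
    rw [mem_Icc] at hm'
    rw [dotProduct_smul, nfw_correction_eq_sum_Icc d γ (by omega),
      dotProduct_correction_Icc_eq_ite w d γ hm
        fun j hj ↦ hw j (by simp only [mem_Icc] at hj ⊢; omega),
      smul_eq_mul, mul_sub, mul_ite, mul_ite, mul_zero]
  rw [dotProduct_sum, sum_congr rfl hterm, sum_sub_distrib, sum_Icc_ite_le _ hm,
    sum_Icc_ite_le _ (by omega : 1 ≤ m + 1), mul_sum, mul_sum]
  simp only [mul_comm]

theorem nfw_conjugacy_condition_simplification_general {n N k : ℕ}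
    (hNk : N ≤ k)
    (H : Matrix (Fin n) (Fin n) ℝ)
    (dFW : Fin n → ℝ) (d : ℕ → Fin n → ℝ) (γ : ℕ → ℝ) (α : ℕ → ℝ)
    (hconj : ∀ m ∈ Finset.Icc 1 N, ∀ m' ∈ Finset.Icc 1 N, m ≠ m' →
      d (k - m) ⬝ᵥ H.mulVec (d (k - m')) = 0) :
    ∀ m ∈ Finset.Icc 1 N,
      d (k - m) ⬝ᵥ H.mulVec (α 0 • dFW + ∑ m' ∈ Finset.Icc 1 N, α m' •
          (∑ i ∈ Finset.range m', (1 - γ (k - m' + i)) • d (k - m' + i)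
            - ∑ i ∈ Finset.range (m' - 1), d (k - m' + i + 1)))
        = α 0 * (d (k - m) ⬝ᵥ H.mulVec dFW)
          + (1 - γ (k - m)) * (d (k - m) ⬝ᵥ H.mulVec (d (k - m))) * α m
          - γ (k - m) * (d (k - m) ⬝ᵥ H.mulVec (d (k - m)))
              * ∑ i ∈ Finset.Icc (m + 1) N, α i := by
  intro m hm
  obtain ⟨hm1, hmN⟩ := mem_Icc.mp hm
  have hw : ∀ j ∈ Icc 1 N, j ≠ m → (d (k - m) ᵥ* H) ⬝ᵥ d (k - j) = 0 := fun j hj hne ↦ by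
    rw [← dotProduct_mulVec]
    exact hconj m hm j hj hne.symm
  simp only [dotProduct_mulVec, dotProduct_add, dotProduct_smul,
    dotProduct_sum_nfw_correction _ d γ α hNk hm1 hw]
  rw [← add_sum_Ioc_eq_sum_Icc hmN, Icc_add_one_left_eq_Ioc, smul_eq_mul]
  ring

/-- Simplification of the conjugacy condition in N-conjugate
Frank–Wolfe. With `H` symmetric and the previous directions pairwise
`H`-conjugate, for each `m ∈ {1, …, N}` the inner product of `d (k−m)` with
`H` applied to
`dk = α 0 • dFW + ∑_{m'=1}^N α m' • (∑_{i=0}^{m'−1} (1 − γ (k−m'+i)) • d (k−m'+i)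
  − ∑_{i=0}^{m'−2} d (k−m'+i+1))`
equals `α 0 * A m + (1 − γ (k−m)) * B m * α m − γ (k−m) * B m * ∑_{i=m+1}^N α i`,
where `A m = d(k−m)ᵀ H dFW` and `B m = d(k−m)ᵀ H d(k−m)`. -/
theorem nfw_conjugacy_condition_simplification {n N k : ℕ}
    (hN : 1 ≤ N) (hNk : N ≤ k)
    (H : Matrix (Fin n) (Fin n) ℝ) (hH : H.IsSymm)
    (dFW : Fin n → ℝ) (d : ℕ → Fin n → ℝ) (γ : ℕ → ℝ) (α : ℕ → ℝ)
    (hconj : ∀ m ∈ Finset.Icc 1 N, ∀ m' ∈ Finset.Icc 1 N, m ≠ m' →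
      d (k - m) ⬝ᵥ H.mulVec (d (k - m')) = 0) :
    ∀ m ∈ Finset.Icc 1 N,
      d (k - m) ⬝ᵥ H.mulVec (α 0 • dFW + ∑ m' ∈ Finset.Icc 1 N, α m' •
          (∑ i ∈ Finset.range m', (1 - γ (k - m' + i)) • d (k - m' + i)
            - ∑ i ∈ Finset.range (m' - 1), d (k - m' + i + 1)))
        = α 0 * (d (k - m) ⬝ᵥ H.mulVec dFW)
          + (1 - γ (k - m)) * (d (k - m) ⬝ᵥ H.mulVec (d (k - m))) * α m
          - γ (k - m) * (d (k - m) ⬝ᵥ H.mulVec (d (k - m)))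
              * ∑ i ∈ Finset.Icc (m + 1) N, α i :=
  nfw_conjugacy_condition_simplification_general hNk H dFW d γ α hconj
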